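/- Let n ≥ 3 be an odd integer and let p a b c i j k (a, b, c ∈ Fin 2; i, j, k ∈ ZMod n) be a tripartite no-signaling probability distribution (nonnegative; Σ_{a,b,c} p a b c i j k = 1 for all i,j,k; Σ_a p independent of i, Σ_b p independent of j, Σ_c p independent of k). Then there exists a tripartite no-signaling probability distribution p' with the same winning probability in the extended odd cycle game G'_OC such that p' is invariant under: (i) flipping all outputs, p'(a,b,c|i,j,k) = p'(1−a,1−b,1−c|i,j,k); (ii) cyclic shift of all inputs, p'(a,b,c|i,j,k) = p'(a,b,c|i+m, j+m, k+m) for all m ∈ ZMod n; and (iii) exchanging the roles of B and C, p'(a,b,c|i,j,k) = p'(a,c,b|i,k,j). -/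

import Mathlib

open Finset

/-- A tripartite probability distribution `p a b c i j k` with inputs in
`ZMod n` and binary outputs is no-signaling if it is nonnegative, normalized,
and each party's marginal output distribution is independent of that party's
own input having been varied (single-party no-signaling conditions). -/
def IsNoSignaling3 (n : ℕ) [NeZero n]
    (p : Fin 2 → Fin 2 → Fin 2 → ZMod n → ZMod n → ZMod n → ℝ) : Prop :=
  (∀ a b c i j k, 0 ≤ p a b c i j k) ∧
  (∀ i j k, ∑ a : Fin 2, ∑ b : Fin 2, ∑ c : Fin 2, p a b c i j k = 1) ∧
  (∀ b c i i' j k, ∑ a : Fin 2, p a b c i j k = ∑ a : Fin 2, p a b c i' j k) ∧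
  (∀ a c i j j' k, ∑ b : Fin 2, p a b c i j k = ∑ b : Fin 2, p a b c i j' k) ∧
  (∀ a b i j k k', ∑ c : Fin 2, p a b c i j k = ∑ c : Fin 2, p a b c i j k')

/-- The winning probability of `p` in the extended odd cycle game `G'_OC`:
the referee picks `q` uniformly in `ZMod n`; with probability 1/2 he sends `q`
to all three players and requires `a = b = c`; with probability 1/2 he sends
`q` to A and `q+1` to both B and C and requires `a ≠ b` and `b = c`. -/
noncomputable def ocWinProb (n : ℕ) [NeZero n]
    (p : Fin 2 → Fin 2 → Fin 2 → ZMod n → ZMod n → ZMod n → ℝ) : ℝ :=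
  (1 / (2 * (n : ℝ))) * ∑ q : ZMod n,
    ((∑ a : Fin 2, ∑ b : Fin 2, ∑ c : Fin 2,
        if a = b ∧ b = c then p a b c q q q else 0) +
      (∑ a : Fin 2, ∑ b : Fin 2, ∑ c : Fin 2,
        if a ≠ b ∧ b = c then p a b c q (q + 1) (q + 1) else 0))

/-- **Symmetrization step in the proof of Theorem 3.** Every tripartite
no-signaling distribution for the extended odd cycle game can be replaced by a
no-signaling distribution with the same winning probability that is invariant
under (i) flipping all outputs, (ii) cyclically shifting all inputs, and (iii)
exchanging the roles of B and C. -/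
theorem oddcycle_ext_symmetrization
    (n : ℕ) [NeZero n] (hn : 3 ≤ n) (hodd : Odd n)
    (p : Fin 2 → Fin 2 → Fin 2 → ZMod n → ZMod n → ZMod n → ℝ)
    (hp : IsNoSignaling3 n p) :
    ∃ p' : Fin 2 → Fin 2 → Fin 2 → ZMod n → ZMod n → ZMod n → ℝ,
      IsNoSignaling3 n p' ∧
      ocWinProb n p' = ocWinProb n p ∧
      (∀ a b c i j k, p' a b c i j k = p' (1 - a) (1 - b) (1 - c) i j k) ∧
      (∀ a b c i j k, ∀ m : ZMod n,
        p' a b c i j k = p' a b c (i + m) (j + m) (k + m)) ∧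
      (∀ a b c i j k, p' a b c i j k = p' a c b i k j) := by
  
  obtain ⟨hpos, hnorm, hA, hB, hC⟩ := hp
  have hn0 : (n : ℝ) ≠ 0 := Nat.cast_ne_zero.mpr (NeZero.ne n)
  have f0 : (1 : Fin 2) - 0 = 1 := rfl
  have f1 : (1 : Fin 2) - 1 = 0 := rfl
  refine ⟨fun a b c i j k => (∑ m : ZMod n,
      (p a b c (i+m) (j+m) (k+m) + p (1-a) (1-b) (1-c) (i+m) (j+m) (k+m)
       + p a c b (i+m) (k+m) (j+m) + p (1-a) (1-c) (1-b) (i+m) (k+m) (j+m))) / (4*(n:ℝ)),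
    ⟨?_, ?_, ?_, ?_, ?_⟩, ?_, ?_, ?_, ?_⟩
  · -- nonneg
    intro a b c i j k
    apply div_nonneg _ (by positivity)
    apply Finset.sum_nonneg
    intro m _
    have h1 := hpos a b c (i+m) (j+m) (k+m)
    have h2 := hpos (1-a) (1-b) (1-c) (i+m) (j+m) (k+m)
    have h3 := hpos a c b (i+m) (k+m) (j+m)
    have h4 := hpos (1-a) (1-c) (1-b) (i+m) (k+m) (j+m)
    linarith
  · -- normalization
    intro i j k
    simp only [Fin.sum_univ_two, f0, f1, ← add_div, ← Finset.sum_add_distrib]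
    rw [Finset.sum_congr rfl (fun m _ => ?_ : ∀ m ∈ Finset.univ, _ = (4:ℝ))]
    · rw [Finset.sum_const, Finset.card_univ, ZMod.card]
      field_simp
      ring
    · have h1 := hnorm (i+m) (j+m) (k+m)
      have h2 := hnorm (i+m) (k+m) (j+m)
      simp only [Fin.sum_univ_two] at h1 h2
      linarith
  · -- A no-signaling
    intro b c i i' j k
    simp only [Fin.sum_univ_two, f0, f1, ← add_div, ← Finset.sum_add_distrib]
    congr 1
    apply Finset.sum_congr rfl
    intro m _
    have h1 := hA b c (i+m) (i'+m) (j+m) (k+m)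
    have h2 := hA (1-b) (1-c) (i+m) (i'+m) (j+m) (k+m)
    have h3 := hA c b (i+m) (i'+m) (k+m) (j+m)
    have h4 := hA (1-c) (1-b) (i+m) (i'+m) (k+m) (j+m)
    simp only [Fin.sum_univ_two, f0, f1] at h1 h2 h3 h4
    linarith
  · -- B no-signaling
    intro a c i j j' k
    simp only [Fin.sum_univ_two, f0, f1, ← add_div, ← Finset.sum_add_distrib]
    congr 1
    apply Finset.sum_congr rfl
    intro m _
    have h1 := hB a c (i+m) (j+m) (j'+m) (k+m)
    have h2 := hB (1-a) (1-c) (i+m) (j+m) (j'+m) (k+m)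
    have h3 := hC a c (i+m) (k+m) (j+m) (j'+m)
    have h4 := hC (1-a) (1-c) (i+m) (k+m) (j+m) (j'+m)
    simp only [Fin.sum_univ_two, f0, f1] at h1 h2 h3 h4
    linarith
  · -- C no-signaling
    intro a b i j k k'
    simp only [Fin.sum_univ_two, f0, f1, ← add_div, ← Finset.sum_add_distrib]
    congr 1
    apply Finset.sum_congr rfl
    intro m _
    have h1 := hC a b (i+m) (j+m) (k+m) (k'+m)
    have h2 := hC (1-a) (1-b) (i+m) (j+m) (k+m) (k'+m)
    have h3 := hB a b (i+m) (k+m) (k'+m) (j+m)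
    have h4 := hB (1-a) (1-b) (i+m) (k+m) (k'+m) (j+m)
    simp only [Fin.sum_univ_two, f0, f1] at h1 h2 h3 h4
    linarith
  · -- winning probability
    have hform : ∀ r : Fin 2 → Fin 2 → Fin 2 → ZMod n → ZMod n → ZMod n → ℝ,
        ocWinProb n r = (1/(2*(n:ℝ))) * ∑ q : ZMod n,
          (r 0 0 0 q q q + r 1 1 1 q q q + r 0 1 1 q (q+1) (q+1) + r 1 0 0 q (q+1) (q+1)) := by
      intro r
      unfold ocWinProb
      congr 1
      apply Finset.sum_congr rfl
      intro q _
      norm_num [Fin.sum_univ_two]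
      ring
    rw [hform, hform]
    congr 1
    set g : ZMod n → ℝ := fun x =>
      p 0 0 0 x x x + p 1 1 1 x x x + p 0 1 1 x (x+1) (x+1) + p 1 0 0 x (x+1) (x+1) with hg
    have step1 : ∀ q : ZMod n,
        ((∑ m : ZMod n, (p 0 0 0 (q+m) (q+m) (q+m) + p (1-0) (1-0) (1-0) (q+m) (q+m) (q+m)
            + p 0 0 0 (q+m) (q+m) (q+m) + p (1-0) (1-0) (1-0) (q+m) (q+m) (q+m))) / (4*(n:ℝ))
         + (∑ m : ZMod n, (p 1 1 1 (q+m) (q+m) (q+m) + p (1-1) (1-1) (1-1) (q+m) (q+m) (q+m)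
            + p 1 1 1 (q+m) (q+m) (q+m) + p (1-1) (1-1) (1-1) (q+m) (q+m) (q+m))) / (4*(n:ℝ))
         + (∑ m : ZMod n, (p 0 1 1 (q+m) (q+1+m) (q+1+m) + p (1-0) (1-1) (1-1) (q+m) (q+1+m) (q+1+m)
            + p 0 1 1 (q+m) (q+1+m) (q+1+m) + p (1-0) (1-1) (1-1) (q+m) (q+1+m) (q+1+m))) / (4*(n:ℝ))
         + (∑ m : ZMod n, (p 1 0 0 (q+m) (q+1+m) (q+1+m) + p (1-1) (1-0) (1-0) (q+m) (q+1+m) (q+1+m)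
            + p 1 0 0 (q+m) (q+1+m) (q+1+m) + p (1-1) (1-0) (1-0) (q+m) (q+1+m) (q+1+m))) / (4*(n:ℝ)))
        = (∑ x : ZMod n, g x) / (n:ℝ) := by
      intro q
      simp only [f0, f1, ← add_div, ← Finset.sum_add_distrib]
      have key : ∀ m : ZMod n,
          (p 0 0 0 (q+m) (q+m) (q+m) + p 1 1 1 (q+m) (q+m) (q+m)
            + p 0 0 0 (q+m) (q+m) (q+m) + p 1 1 1 (q+m) (q+m) (q+m)
           + (p 1 1 1 (q+m) (q+m) (q+m) + p 0 0 0 (q+m) (q+m) (q+m)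
            + p 1 1 1 (q+m) (q+m) (q+m) + p 0 0 0 (q+m) (q+m) (q+m))
           + (p 0 1 1 (q+m) (q+1+m) (q+1+m) + p 1 0 0 (q+m) (q+1+m) (q+1+m)
            + p 0 1 1 (q+m) (q+1+m) (q+1+m) + p 1 0 0 (q+m) (q+1+m) (q+1+m))
           + (p 1 0 0 (q+m) (q+1+m) (q+1+m) + p 0 1 1 (q+m) (q+1+m) (q+1+m)
            + p 1 0 0 (q+m) (q+1+m) (q+1+m) + p 0 1 1 (q+m) (q+1+m) (q+1+m)))
          = 4 * g (q+m) := by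
        intro m
        have hx : q + 1 + m = q + m + 1 := by ring
        rw [hg, hx]
        ring
      calc (∑ m : ZMod n, _) / (4*(n:ℝ)) = (∑ m : ZMod n, 4 * g (q+m)) / (4*(n:ℝ)) := by
            rw [Finset.sum_congr rfl (fun m _ => key m)]
        _ = (4 * ∑ m : ZMod n, g (q+m)) / (4*(n:ℝ)) := by rw [Finset.mul_sum]
        _ = (∑ m : ZMod n, g (q+m)) / (n:ℝ) := mul_div_mul_left _ _ (by norm_num)
        _ = (∑ x : ZMod n, g x) / (n:ℝ) := by
              congr 1
              have h := Equiv.sum_comp (Equiv.addLeft q) g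
              simpa [Equiv.coe_addLeft] using h
    trans ∑ _q : ZMod n, (∑ x : ZMod n, g x) / (n:ℝ)
    · exact Finset.sum_congr rfl (fun q _ => step1 q)
    · rw [Finset.sum_const, Finset.card_univ, ZMod.card, nsmul_eq_mul,
        mul_div_cancel₀ _ hn0]
  · -- flip invariance
    intro a b c i j k
    beta_reduce
    congr 1
    apply Finset.sum_congr rfl
    intro m _
    simp only [sub_sub_cancel]
    ring
  · -- shift invariance
    intro a b c i j k m'
    beta_reduce
    congr 1
    have := Equiv.sum_comp (Equiv.addLeft m') (fun x : ZMod n =>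
      p a b c (i+x) (j+x) (k+x) + p (1-a) (1-b) (1-c) (i+x) (j+x) (k+x)
       + p a c b (i+x) (k+x) (j+x) + p (1-a) (1-c) (1-b) (i+x) (k+x) (j+x))
    simp only [Equiv.coe_addLeft] at this
    rw [← this]
    apply Finset.sum_congr rfl
    intro m _
    have h1 : i + m' + m = i + (m' + m) := by ring
    have h2 : j + m' + m = j + (m' + m) := by ring
    have h3 : k + m' + m = k + (m' + m) := by ring
    rw [h1, h2, h3]
  · -- swap invariance
    intro a b c i j k
    beta_reduce
    congr 1
    apply Finset.sum_congr rfl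
    intro m _
    ring
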